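/- arXiv:0810.0066 — 2 statements merged into one kernel-verified Lean document; each statement's English description precedes it below -/
import Mathlib

section
/- Let A → M be a Lie algebroid and E, C → M vector bundles. VB-algebroids of type 0 with side bundles A and E and core C are classified up to isomorphism by triples (∇^s, ∇^c, [Ω]), where ∇^s is a flat A-connection on E, ∇^c is a flat A-connection on C, and [Ω] is a cohomology class in H²(A; Hom(E,C)) taken with respect to the flat A-connection on Hom(E,C) induced by ∇^c and ∇^s. -/
/-!
STATEMENT 15:  Let `A → M` be a Lie algebroid and `E, C → M` vector bundles.
`VB`-algebroids of type 0 (core-anchor `∂ = 0`) with side bundles `A`, `E`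
and core `C` are classified up to isomorphism by triples `(∇ˢ, ∇ᶜ, [Ω])`:
a flat `A`-connection `∇ˢ` on `E`, a flat `A`-connection `∇ᶜ` on `C`, and a
cohomology class `[Ω] ∈ H²(A; Hom(E,C))` with respect to the flat
`A`-connection on `Hom(E,C)` induced by `∇ᶜ` and `∇ˢ`.

We work in the algebraic section-level model: a `VB`-algebroid (with chosen
decomposition) is a flat quadruple `(∂, ∇ᶜ, ∇ˢ, Ω)` (`SCData` + `SCData.Flat`),
type 0 meaning `∂ = 0`; isomorphisms are changes of decomposition
`σ ∈ Ω¹(A; Hom(E,C))` acting by the change-of-lift law (`GaugeRel`).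
"Classified by triples" is stated as: (i) every triple consisting of flat
connections `∇ᶜ`, `∇ˢ` and a `D`-closed `Ω ∈ Ω²(A; Hom(E,C))` is realized
by a type-0 structure; and (ii) two type-0 structures are isomorphic iff
they have the same `∇ˢ` and `∇ᶜ`, and their `Ω`'s are cohomologous, i.e.
differ by `Dσ` for some `σ ∈ Ω¹(A; Hom(E,C))`.
-/
/-- Algebraic (Lie–Rinehart-type) model of a Lie algebroid `A → M`:
the commutative ring `R` plays the role of the smooth functions on the
base `M`, the `R`-module `A` plays the role of the module of sections
of the algebroid, `br` is the Lie bracket and `ρ` the anchor acting on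
functions by derivations. -/
structure LAlgd (R : Type) [CommRing R] (A : Type) [AddCommGroup A] [Module R A] where
  br : A → A → A
  ρ : A → R → R
  br_add_left : ∀ X Y Z, br (X + Y) Z = br X Z + br Y Z
  br_add_right : ∀ X Y Z, br X (Y + Z) = br X Y + br X Z
  br_alt : ∀ X, br X X = 0
  jacobi : ∀ X Y Z, br X (br Y Z) = br (br X Y) Z + br Y (br X Z)
  ρ_add_left : ∀ X Y f, ρ (X + Y) f = ρ X f + ρ Y f
  ρ_smul_left : ∀ (f : R) X g, ρ (f • X) g = f * ρ X g
  ρ_add : ∀ X f g, ρ X (f + g) = ρ X f + ρ X g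
  ρ_mul : ∀ X f g, ρ X (f * g) = f * ρ X g + g * ρ X f
  ρ_br : ∀ X Y f, ρ (br X Y) f = ρ X (ρ Y f) - ρ Y (ρ X f)
  leibniz : ∀ X (f : R) Y, br X (f • Y) = f • br X Y + ρ X f • Y

/-- Component data of a degree-1 `A`-superconnection on the graded bundle
`C[1] ⊕ E` (here `E` and `C` are the `R`-modules of sections of the
corresponding vector bundles):  a bundle map `bd = ∂ : C → E`, an
`A`-connection `cc = ∇ᶜ` on `C`, an `A`-connection `ss = ∇ˢ` on `E`, and a
`Hom(E,C)`-valued alternating 2-form `om = Ω`. -/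
structure SCData (R A E C : Type) [CommRing R]
    [AddCommGroup A] [Module R A] [AddCommGroup E] [Module R E]
    [AddCommGroup C] [Module R C] (L : LAlgd R A) where
  bd : C →ₗ[R] E
  cc : A → C → C
  ss : A → E → E
  om : A →ₗ[R] A →ₗ[R] (E →ₗ[R] C)
  om_alt : ∀ X, om X X = 0
  cc_add_left : ∀ X Y α, cc (X + Y) α = cc X α + cc Y α
  cc_smul_left : ∀ (f : R) X α, cc (f • X) α = f • cc X α
  cc_add_right : ∀ X α β, cc X (α + β) = cc X α + cc X β
  cc_leibniz : ∀ X (f : R) α, cc X (f • α) = f • cc X α + L.ρ X f • α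
  ss_add_left : ∀ X Y ε, ss (X + Y) ε = ss X ε + ss Y ε
  ss_smul_left : ∀ (f : R) X ε, ss (f • X) ε = f • ss X ε
  ss_add_right : ∀ X ε δ, ss X (ε + δ) = ss X ε + ss X δ
  ss_leibniz : ∀ X (f : R) ε, ss X (f • ε) = f • ss X ε + L.ρ X f • ε

variable {R A E C : Type} [CommRing R]
    [AddCommGroup A] [Module R A] [AddCommGroup E] [Module R E]
    [AddCommGroup C] [Module R C] {L : LAlgd R A}

/-- Flatness `𝒟² = 0` of the superconnection `𝒟 = ∂ + Dᶜ + Dˢ + Ω`, in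
components: `∂∇ᶜ = ∇ˢ∂`, `Fᶜ = Ω∂`, `Fˢ = ∂Ω`, and `DᶜΩ + ΩDˢ = 0`
(the covariant differential of `Ω` with respect to the induced connection on
`Hom(E,C)` vanishes). -/
def SCData.Flat (d : SCData R A E C L) : Prop :=
  (∀ X α, d.bd (d.cc X α) = d.ss X (d.bd α)) ∧
  (∀ X Y α, d.cc X (d.cc Y α) - d.cc Y (d.cc X α) - d.cc (L.br X Y) α
      = d.om X Y (d.bd α)) ∧
  (∀ X Y ε, d.ss X (d.ss Y ε) - d.ss Y (d.ss X ε) - d.ss (L.br X Y) ε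
      = d.bd (d.om X Y ε)) ∧
  (∀ X Y Z ε,
      d.cc X (d.om Y Z ε) - d.om Y Z (d.ss X ε)
      + d.cc Y (d.om Z X ε) - d.om Z X (d.ss Y ε)
      + d.cc Z (d.om X Y ε) - d.om X Y (d.ss Z ε)
      - d.om (L.br X Y) Z ε - d.om (L.br Y Z) X ε - d.om (L.br Z X) Y ε = 0)

/-- The covariant differential on `Hom(E,C)`-valued 1-forms of the flat
`A`-connection on `Hom(E,C)` induced by connections `cc` on `C` and `ss` on
`E`: `(Dσ)(X,Y) = ∇^{Hom}_X (σ Y) − ∇^{Hom}_Y (σ X) − σ[X,Y]`, where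
`∇^{Hom}_X φ = cc_X ∘ φ − φ ∘ ss_X`. -/
def homD1 (L : LAlgd R A) (cc : A → C → C) (ss : A → E → E)
    (σ : A →ₗ[R] (E →ₗ[R] C)) (X Y : A) (ε : E) : C :=
  cc X (σ Y ε) - σ Y (ss X ε) - cc Y (σ X ε) + σ X (ss Y ε)
    - σ (L.br X Y) ε

/-- The covariant differential on `Hom(E,C)`-valued 2-forms. -/
def homD2 (L : LAlgd R A) (cc : A → C → C) (ss : A → E → E)
    (om : A →ₗ[R] A →ₗ[R] (E →ₗ[R] C)) (X Y Z : A) (ε : E) : C :=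
  cc X (om Y Z ε) - om Y Z (ss X ε)
    + cc Y (om Z X ε) - om Z X (ss Y ε)
    + cc Z (om X Y ε) - om X Y (ss Z ε)
    - om (L.br X Y) Z ε - om (L.br Y Z) X ε - om (L.br Z X) Y ε

/-- The action of a change of decomposition `σ ∈ Ω¹(A; Hom(E,C))` on the
superconnection data (the change-of-lift transformation law). -/
def GaugeRel (q q' : SCData R A E C L) (σ : A →ₗ[R] (E →ₗ[R] C)) : Prop :=
  q'.bd = q.bd ∧
  (∀ X α, q'.cc X α = q.cc X α + σ X (q.bd α)) ∧
  (∀ X ε, q'.ss X ε = q.ss X ε + q.bd (σ X ε)) ∧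
  (∀ X Y ε, q'.om X Y ε
    = q.om X Y ε + σ (L.br X Y) ε
      - σ X (q.ss Y ε) + σ Y (q.ss X ε)
      - q.cc X (σ Y ε) + q.cc Y (σ X ε)
      - σ X (q.bd (σ Y ε)) - σ Y (q.bd (σ X ε)))

/-!
When `∂ = 0` every term involving `∂` drops out of the flatness equations and of the
change-of-lift law: flatness splits into flatness of `∇ᶜ` and `∇ˢ` together with `DΩ = 0`,
and a change of lift `σ` fixes both connections and replaces `Ω` by `Ω - Dσ = Ω + D(-σ)`.
-/

theorem SCData.flat_iff_of_bd_eq_zero {q : SCData R A E C L} (hq : q.bd = 0) :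
    q.Flat ↔
      (∀ X Y α, q.cc X (q.cc Y α) - q.cc Y (q.cc X α) = q.cc (L.br X Y) α) ∧
      (∀ X Y ε, q.ss X (q.ss Y ε) - q.ss Y (q.ss X ε) = q.ss (L.br X Y) ε) ∧
      ∀ X Y Z ε, homD2 L q.cc q.ss q.om X Y Z ε = 0 := by
  have ss_zero : ∀ X, q.ss X 0 = 0 := fun X =>
    (AddMonoidHom.mk' (q.ss X) (q.ss_add_right X)).map_zero
  simp only [SCData.Flat, homD2, hq, LinearMap.zero_apply, map_zero, ss_zero, sub_eq_zero,
    true_and, implies_true]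

theorem homD1_neg (cc : A → C → C) (ss : A → E → E)
    (hcc : ∀ X α β, cc X (α + β) = cc X α + cc X β) (σ : A →ₗ[R] (E →ₗ[R] C)) (X Y : A)
    (ε : E) : homD1 L cc ss (-σ) X Y ε = -homD1 L cc ss σ X Y ε := by
  have cc_neg : ∀ X α, cc X (-α) = -cc X α := fun X => (AddMonoidHom.mk' (cc X) (hcc X)).map_neg
  simp only [homD1, LinearMap.neg_apply, cc_neg]
  abel

theorem gaugeRel_iff_of_bd_eq_zero {q q' : SCData R A E C L} (hq : q.bd = 0)
    (σ : A →ₗ[R] (E →ₗ[R] C)) :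
    GaugeRel q q' σ ↔ q'.bd = 0 ∧ q'.cc = q.cc ∧ q'.ss = q.ss ∧
      ∀ X Y ε, q'.om X Y ε = q.om X Y ε - homD1 L q.cc q.ss σ X Y ε := by
  have om_eq : ∀ X Y ε, q.om X Y ε + σ (L.br X Y) ε - σ X (q.ss Y ε) + σ Y (q.ss X ε)
      - q.cc X (σ Y ε) + q.cc Y (σ X ε) = q.om X Y ε - homD1 L q.cc q.ss σ X Y ε := by
    intro X Y ε
    simp only [homD1]
    abel
  simp only [GaugeRel, hq, LinearMap.zero_apply, map_zero, add_zero, sub_zero, om_eq,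
    ← funext_iff]

theorem exists_gaugeRel_iff_of_bd_eq_zero {q q' : SCData R A E C L} (hq : q.bd = 0)
    (hq' : q'.bd = 0) :
    (∃ σ, GaugeRel q q' σ) ↔ q.cc = q'.cc ∧ q.ss = q'.ss ∧
      ∃ σ : A →ₗ[R] (E →ₗ[R] C),
        ∀ X Y ε, q'.om X Y ε = q.om X Y ε + homD1 L q.cc q.ss σ X Y ε := by
  rw [(Equiv.neg _).exists_congr_left]
  simp only [gaugeRel_iff_of_bd_eq_zero hq, hq', true_and, Equiv.neg_symm, Equiv.neg_apply,
    homD1_neg _ _ q.cc_add_right, sub_neg_eq_add, exists_and_left, eq_comm (a := q'.cc),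
    eq_comm (a := q'.ss)]

/-- classification of type-0 `VB`-algebroids with sides `A`,
`E` and core `C` up to isomorphism by triples `(∇ˢ, ∇ᶜ, [Ω])`. -/
theorem type0_vbalgebroid_classification
    (R A E C : Type) [CommRing R]
    [AddCommGroup A] [Module R A] [AddCommGroup E] [Module R E]
    [AddCommGroup C] [Module R C] (L : LAlgd R A) :
    -- (i) realization: every triple `(∇ˢ, ∇ᶜ, Ω)` with `∇ᶜ`, `∇ˢ` flat and
    -- `DΩ = 0` arises from a type-0 `VB`-algebroid
    (∀ (cc : A → C → C),
      (∀ X Y α, cc (X + Y) α = cc X α + cc Y α) →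
      (∀ (f : R) X α, cc (f • X) α = f • cc X α) →
      (∀ X α β, cc X (α + β) = cc X α + cc X β) →
      (∀ X (f : R) α, cc X (f • α) = f • cc X α + L.ρ X f • α) →
      (∀ X Y α, cc X (cc Y α) - cc Y (cc X α) = cc (L.br X Y) α) →
      ∀ (ss : A → E → E),
      (∀ X Y ε, ss (X + Y) ε = ss X ε + ss Y ε) →
      (∀ (f : R) X ε, ss (f • X) ε = f • ss X ε) →
      (∀ X ε δ, ss X (ε + δ) = ss X ε + ss X δ) →
      (∀ X (f : R) ε, ss X (f • ε) = f • ss X ε + L.ρ X f • ε) →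
      (∀ X Y ε, ss X (ss Y ε) - ss Y (ss X ε) = ss (L.br X Y) ε) →
      ∀ (om : A →ₗ[R] A →ₗ[R] (E →ₗ[R] C)),
      (∀ X, om X X = 0) →
      (∀ X Y Z ε, homD2 L cc ss om X Y Z ε = 0) →
      ∃ q : SCData R A E C L,
        q.bd = 0 ∧ q.Flat ∧ q.cc = cc ∧ q.ss = ss ∧ q.om = om) ∧
    -- (ii) two type-0 structures are isomorphic iff they have the same
    -- side and core connections and cohomologous `Ω`'s
    (∀ q q' : SCData R A E C L, q.bd = 0 → q'.bd = 0 → q.Flat → q'.Flat →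
      ((∃ σ : A →ₗ[R] (E →ₗ[R] C), GaugeRel q q' σ) ↔
        (q.cc = q'.cc ∧ q.ss = q'.ss ∧
          ∃ σ : A →ₗ[R] (E →ₗ[R] C),
            ∀ X Y ε, q'.om X Y ε = q.om X Y ε + homD1 L q.cc q.ss σ X Y ε))) := by
  refine ⟨fun cc hcc_add_left hcc_smul_left hcc_add_right hcc_leibniz hcc_flat
      ss hss_add_left hss_smul_left hss_add_right hss_leibniz hss_flat om hom_alt hom_closed =>
    ⟨⟨0, cc, ss, om, hom_alt, hcc_add_left, hcc_smul_left, hcc_add_right, hcc_leibniz,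
      hss_add_left, hss_smul_left, hss_add_right, hss_leibniz⟩,
      rfl, (SCData.flat_iff_of_bd_eq_zero rfl).2 ⟨hcc_flat, hss_flat, hom_closed⟩, rfl, rfl, rfl⟩,
    fun q q' hq hq' _ _ => exists_gaugeRel_iff_of_bd_eq_zero hq hq'⟩
end

section
/- Let A → M be a regular Lie algebroid, with K = ker ρ_A, F = im ρ_A ⊆ TM, and ν = TM/F. Choose splittings A ≅ K ⊕ F and TM ≅ ν ⊕ F; let [·,·]_K be the induced bracket on Γ(K), let ∇^K be the F-connection on K and B ∈ Ω²(F; K) defined by [φ, k]_A = ∇^K_φ k and [φ, φ′]_A = B(φ, φ′) + [φ, φ′]_{TM} for φ, φ′ ∈ Γ(F), k ∈ Γ(K); let ∇̃^K be an extension of ∇^K to a TM-connection on K with curvature R̃^K; let ∇^F be the ν-connection on F with ∇^F_ψ φ the F-component of [ψ, φ], extended to a TM-connection ∇̃^F on F. Define, for X, Y ∈ Γ(A) with components X_K, Y_K ∈ Γ(K), X_F, Y_F ∈ Γ(F), and ψ ∈ Γ(ν): Ω_{X,Y}ψ = [∇̃^K_ψ X_K, Y_K]_K + [X_K, ∇̃^K_ψ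 Y_K]_K − ∇̃^K_ψ [X_K, Y_K]_K + R̃^K_{X_F, ψ} Y_K − R̃^K_{Y_F, ψ} X_K + ∇̃^K_ψ B(X_F, Y_F) − B(∇̃^F_ψ X_F, Y_F) − B(X_F, ∇̃^F_ψ Y_F). Then Ω_{X,Y}ψ vanishes for all X, Y ∈ Γ(A) and ψ ∈ Γ(ν) if and only if: (1) ∇̃^K_ψ is a derivation of the bracket [·,·]_K for all ψ ∈ Γ(ν); (2) R̃^K_{φ, ψ} = 0 for all φ ∈ Γ(F) and ψ ∈ Γ(ν); and (3) B(∇̃^F_ψ φ, φ′) + B(φ, ∇̃^F_ψ φ′) − ∇̃^K_ψ B(φ, φ′) = 0 for all φ, φ′ ∈ Γ(F) and ψ ∈ Γ(ν). -/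
/-!
STATEMENT 18:  Let `A → M` be a regular Lie algebroid with `K = ker ρ_A`,
`F = im ρ_A ⊆ TM`, `ν = TM/F`, and choose splittings `A ≅ K ⊕ F` and
`TM ≅ ν ⊕ F`.  With the induced bracket `[·,·]_K` on `Γ(K)`, the
`F`-connection `∇ᴷ` on `K` and the form `B ∈ Ω²(F; K)` (defined by
`[φ, k]_A = ∇ᴷ_φ k` and `[φ, φ′]_A = B(φ,φ′) + [φ,φ′]_{TM}`), a chosen
extension `∇̃ᴷ` of `∇ᴷ` to a `TM`-connection on `K` with curvature `R̃ᴷ`,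
and a chosen extension `∇̃ᶠ` of the `ν`-connection `∇ᶠ` on `F` to a
`TM`-connection, define for `X, Y ∈ Γ(A)` (with components
`X_K, X_F`) and `ψ ∈ Γ(ν)`:
`Ω_{X,Y}ψ = [∇̃ᴷ_ψ X_K, Y_K]_K + [X_K, ∇̃ᴷ_ψ Y_K]_K − ∇̃ᴷ_ψ[X_K, Y_K]_K
 + R̃ᴷ_{X_F,ψ} Y_K − R̃ᴷ_{Y_F,ψ} X_K + ∇̃ᴷ_ψ B(X_F,Y_F)
 − B(∇̃ᶠ_ψ X_F, Y_F) − B(X_F, ∇̃ᶠ_ψ Y_F)`.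
Then `Ω_{X,Y}ψ = 0` for all `X, Y, ψ` iff
(1) `∇̃ᴷ_ψ` is a derivation of `[·,·]_K`,
(2) `R̃ᴷ_{φ,ψ} = 0` for `φ ∈ Γ(F)`, `ψ ∈ Γ(ν)`, and
(3) `B(∇̃ᶠ_ψ φ, φ′) + B(φ, ∇̃ᶠ_ψ φ′) − ∇̃ᴷ_ψ B(φ, φ′) = 0`.

Algebraic (section-level) model: `R` is the ring of functions on `M`,
vector fields on `M` are derivations of `R`, `K`, `F`, `ν` are the modules
of sections, `ιF`, `ιν` realize the splitting `TM ≅ ν ⊕ F`, and an element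
`X ∈ Γ(A)` is a pair `(X_K, X_F) ∈ K × F` via the splitting `A ≅ K ⊕ F`.
-/

section
variable {R K F ν : Type} [CommRing R]
  [AddCommGroup K] [Module R K] [AddCommGroup F] [Module R F]
  [AddCommGroup ν] [Module R ν]

/-- Vector fields on the base, modelled as derivations of `R`. -/
abbrev VF (R : Type) [CommRing R] := Derivation ℤ R R

/-- Curvature of a `TM`-connection. -/
def curv (nk : VF R → K → K) (δ₁ δ₂ : VF R) (k : K) : K :=
  nk δ₁ (nk δ₂ k) - nk δ₂ (nk δ₁ k) - nk ⁅δ₁, δ₂⁆ k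

/-- The upper-left block `Ω_{X,Y}ψ` of the form `Ω` of the adjoint
`VB`-algebroid `TA`, for the `TM`-connection on `A` built from `∇̃ᴷ`, `∇̃ᶠ`
and `B`. -/
def OmTA (brK : K → K → K) (nK : VF R → K → K) (nF : VF R → F → F)
    (B : F → F → K) (ιF : F →ₗ[R] VF R) (ιν : ν →ₗ[R] VF R)
    (X Y : K × F) (ψ : ν) : K :=
  brK (nK (ιν ψ) X.1) Y.1 + brK X.1 (nK (ιν ψ) Y.1) - nK (ιν ψ) (brK X.1 Y.1)
    + curv nK (ιF X.2) (ιν ψ) Y.1 - curv nK (ιF Y.2) (ιν ψ) X.1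
    + nK (ιν ψ) (B X.2 Y.2) - B (nF (ιν ψ) X.2) Y.2 - B X.2 (nF (ιν ψ) Y.2)

end

/-! `Ω_{X,Y}ψ` splits into three independent defects: that of `∇̃ᴷ_ψ` being a derivation of
`[·,·]_K` on `(X_K, Y_K)`, the curvature terms, and (minus) the expression in (3) on
`(X_F, Y_F)`. Evaluating `Ω` on the pairs `((k, 0), (k', 0))`, `((0, φ), (k, 0))` and
`((0, φ), (0, φ'))` isolates each of them. -/

section
variable {R K F ν : Type} [CommRing R] [AddCommGroup K] [AddCommGroup F] [Module R F]
  [AddCommGroup ν] [Module R ν]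

theorem map_zero_of_map_add {M G : Type*} [AddZeroClass M] [AddGroup G] (f : M → G)
    (hf : ∀ x y, f (x + y) = f x + f y) : f 0 = 0 :=
  (AddMonoidHom.mk' f hf).map_zero

theorem curv_zero_left {nK : VF R → K → K} (hnK_zero_left : ∀ k, nK 0 k = 0)
    (hnK_zero_right : ∀ δ, nK δ 0 = 0) (δ : VF R) (k : K) : curv nK 0 δ k = 0 := by
  simp [curv, hnK_zero_left, hnK_zero_right]

theorem curv_apply_zero {nK : VF R → K → K} (hnK_zero_right : ∀ δ, nK δ 0 = 0)
    (δ₁ δ₂ : VF R) : curv nK δ₁ δ₂ 0 = 0 := by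
  simp [curv, hnK_zero_right]

theorem OmTA_eq (brK : K → K → K) (nK : VF R → K → K) (nF : VF R → F → F)
    (B : F → F → K) (ιF : F →ₗ[R] VF R) (ιν : ν →ₗ[R] VF R) (X Y : K × F) (ψ : ν) :
    OmTA brK nK nF B ιF ιν X Y ψ =
      (brK (nK (ιν ψ) X.1) Y.1 + brK X.1 (nK (ιν ψ) Y.1) - nK (ιν ψ) (brK X.1 Y.1))
        + curv nK (ιF X.2) (ιν ψ) Y.1 - curv nK (ιF Y.2) (ιν ψ) X.1
        - (B (nF (ιν ψ) X.2) Y.2 + B X.2 (nF (ιν ψ) Y.2) - nK (ιν ψ) (B X.2 Y.2)) := by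
  unfold OmTA
  abel

section Specializations

variable {brK : K → K → K} {nK : VF R → K → K} {nF : VF R → F → F} {B : F → F → K}

theorem OmTA_inl_inl (ιF : F →ₗ[R] VF R) (ιν : ν →ₗ[R] VF R)
    (hnK_zero_left : ∀ k, nK 0 k = 0) (hnK_zero_right : ∀ δ, nK δ 0 = 0)
    (hnF_zero_right : ∀ δ, nF δ 0 = 0) (hB_zero_right : ∀ φ, B φ 0 = 0)
    (k k' : K) (ψ : ν) :
    OmTA brK nK nF B ιF ιν (k, 0) (k', 0) ψ =
      brK (nK (ιν ψ) k) k' + brK k (nK (ιν ψ) k') - nK (ιν ψ) (brK k k') := by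
  simp [OmTA_eq, curv_zero_left hnK_zero_left hnK_zero_right, hnK_zero_right, hnF_zero_right,
    hB_zero_right]

theorem OmTA_inr_inl (ιF : F →ₗ[R] VF R) (ιν : ν →ₗ[R] VF R)
    (hbrK_zero_left : ∀ k, brK 0 k = 0) (hnK_zero_right : ∀ δ, nK δ 0 = 0)
    (hnF_zero_right : ∀ δ, nF δ 0 = 0) (hB_zero_right : ∀ φ, B φ 0 = 0)
    (φ : F) (k : K) (ψ : ν) :
    OmTA brK nK nF B ιF ιν (0, φ) (k, 0) ψ = curv nK (ιF φ) (ιν ψ) k := by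
  simp [OmTA_eq, curv_apply_zero hnK_zero_right, hbrK_zero_left, hnK_zero_right,
    hnF_zero_right, hB_zero_right]

theorem OmTA_inr_inr (ιF : F →ₗ[R] VF R) (ιν : ν →ₗ[R] VF R)
    (hbrK_zero_left : ∀ k, brK 0 k = 0) (hnK_zero_right : ∀ δ, nK δ 0 = 0)
    (φ φ' : F) (ψ : ν) :
    OmTA brK nK nF B ιF ιν (0, φ) (0, φ') ψ =
      -(B (nF (ιν ψ) φ) φ' + B φ (nF (ιν ψ) φ') - nK (ιν ψ) (B φ φ')) := by
  simp [OmTA_eq, curv_apply_zero hnK_zero_right, hbrK_zero_left, hnK_zero_right]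

end Specializations

end

section
variable {R K F ν : Type} [CommRing R]
  [AddCommGroup K] [Module R K] [AddCommGroup F] [Module R F]
  [AddCommGroup ν] [Module R ν]

theorem omega_block_vanishing_criterion_general
    (brK : K → K → K) (nK : VF R → K → K) (nF : VF R → F → F)
    (B : F → F → K) (ιF : F →ₗ[R] VF R) (ιν : ν →ₗ[R] VF R)
    -- bilinearity/alternation of the leafwise bracket and of `B`
    (hbrK_add_left : ∀ k k' k'', brK (k + k') k'' = brK k k'' + brK k' k'')
    (hB_add_right : ∀ f f' f'', B f (f' + f'') = B f f' + B f f'')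
    -- the extensions `∇̃ᴷ`, `∇̃ᶠ` are connections
    (hnK_add_left : ∀ δ δ' k, nK (δ + δ') k = nK δ k + nK δ' k)
    (hnK_add_right : ∀ δ k k', nK δ (k + k') = nK δ k + nK δ k')
    (hnF_add_right : ∀ δ φ φ', nF δ (φ + φ') = nF δ φ + nF δ φ') :
    (∀ (X Y : K × F) (ψ : ν), OmTA brK nK nF B ιF ιν X Y ψ = 0) ↔
      ((∀ (ψ : ν) (k k' : K),
          nK (ιν ψ) (brK k k') = brK (nK (ιν ψ) k) k' + brK k (nK (ιν ψ) k')) ∧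
       (∀ (φ : F) (ψ : ν) (k : K), curv nK (ιF φ) (ιν ψ) k = 0) ∧
       (∀ (ψ : ν) (φ φ' : F),
          B (nF (ιν ψ) φ) φ' + B φ (nF (ιν ψ) φ') - nK (ιν ψ) (B φ φ') = 0)) := by
  have hbrK_zero_left k : brK 0 k = 0 := map_zero_of_map_add (brK · k) (hbrK_add_left · · k)
  have hB_zero_right φ : B φ 0 = 0 := map_zero_of_map_add (B φ) (hB_add_right φ)
  have hnK_zero_left k : nK 0 k = 0 := map_zero_of_map_add (nK · k) (hnK_add_left · · k)
  have hnK_zero_right δ : nK δ 0 = 0 := map_zero_of_map_add (nK δ) (hnK_add_right δ)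
  have hnF_zero_right δ : nF δ 0 = 0 := map_zero_of_map_add (nF δ) (hnF_add_right δ)
  constructor
  · intro hΩ
    refine ⟨fun ψ k k' => ?_, fun φ ψ k => ?_, fun ψ φ φ' => ?_⟩
    · have := hΩ (k, 0) (k', 0) ψ
      rw [OmTA_inl_inl ιF ιν hnK_zero_left hnK_zero_right hnF_zero_right hB_zero_right,
        sub_eq_zero] at this
      exact this.symm
    · rw [← OmTA_inr_inl ιF ιν hbrK_zero_left hnK_zero_right hnF_zero_right hB_zero_right]
      exact hΩ (0, φ) (k, 0) ψ
    · rw [← neg_eq_zero, ← OmTA_inr_inr ιF ιν hbrK_zero_left hnK_zero_right]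
      exact hΩ (0, φ) (0, φ') ψ
  · rintro ⟨hderiv, hcurv, hB⟩ X Y ψ
    rw [OmTA_eq, ← hderiv, hcurv, hcurv, hB]
    simp

theorem omega_block_vanishing_criterion
    (brK : K → K → K) (nK : VF R → K → K) (nF : VF R → F → F)
    (B : F → F → K) (ιF : F →ₗ[R] VF R) (ιν : ν →ₗ[R] VF R)
    -- bilinearity/alternation of the leafwise bracket and of `B`
    (hbrK_add_left : ∀ k k' k'', brK (k + k') k'' = brK k k'' + brK k' k'')
    (hbrK_add_right : ∀ k k' k'', brK k (k' + k'') = brK k k' + brK k k'')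
    (hbrK_alt : ∀ k, brK k k = 0)
    (hB_add_left : ∀ f f' f'', B (f + f') f'' = B f f'' + B f' f'')
    (hB_add_right : ∀ f f' f'', B f (f' + f'') = B f f' + B f f'')
    (hB_alt : ∀ f, B f f = 0)
    -- the extensions `∇̃ᴷ`, `∇̃ᶠ` are connections
    (hnK_add_left : ∀ δ δ' k, nK (δ + δ') k = nK δ k + nK δ' k)
    (hnK_add_right : ∀ δ k k', nK δ (k + k') = nK δ k + nK δ k')
    (hnK_leibniz : ∀ δ (f : R) k, nK δ (f • k) = f • nK δ k + δ f • k)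
    (hnF_add_left : ∀ δ δ' φ, nF (δ + δ') φ = nF δ φ + nF δ' φ)
    (hnF_add_right : ∀ δ φ φ', nF δ (φ + φ') = nF δ φ + nF δ φ')
    (hnF_leibniz : ∀ δ (f : R) φ, nF δ (f • φ) = f • nF δ φ + δ f • φ) :
    (∀ (X Y : K × F) (ψ : ν), OmTA brK nK nF B ιF ιν X Y ψ = 0) ↔
      ((∀ (ψ : ν) (k k' : K),
          nK (ιν ψ) (brK k k') = brK (nK (ιν ψ) k) k' + brK k (nK (ιν ψ) k')) ∧
       (∀ (φ : F) (ψ : ν) (k : K), curv nK (ιF φ) (ιν ψ) k = 0) ∧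
       (∀ (ψ : ν) (φ φ' : F),
          B (nF (ιν ψ) φ) φ' + B φ (nF (ιν ψ) φ') - nK (ιν ψ) (B φ φ') = 0)) :=
  omega_block_vanishing_criterion_general brK nK nF B ιF ιν hbrK_add_left hB_add_right hnK_add_left
    hnK_add_right hnF_add_right

end
end
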